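/- arXiv:2305.06682 — 5 statements merged into one kernel-verified Lean document; each statement's English description precedes it below -/
import Mathlib

section
/- Let x ∈ ∂J*(−A*y) and x̄ ∈ ∂J*(−A*ȳ) with Ax̄ = f. Then ⟨Ax − f, y − ȳ⟩ = −(D^{−A*ȳ}(x, x̄) + D^{−A*y}(x̄, x)), i.e., the inner product of the dual velocity with y − ȳ equals minus the symmetric Bregman distance. -/
open Set MeasureTheory

noncomputable section

notation "⟪" x ", " y "⟫" => @inner ℝ _ _ x y

/-- `u` is a subgradient of the convex function `J` at `x`. -/
def HasSubgrad {p : ℕ} (J : EuclideanSpace ℝ (Fin p) → ℝ) (u x : EuclideanSpace ℝ (Fin p)) :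
    Prop :=
  ∀ z, J x + ⟪u, z - x⟫ ≤ J z

/-- Bregman divergence `D^u(x₁,x₂) = J(x₁) - J(x₂) - ⟨u, x₁ - x₂⟩` (for `u ∈ ∂J(x₂)`). -/
def Breg {p : ℕ} (J : EuclideanSpace ℝ (Fin p) → ℝ) (u x₁ x₂ : EuclideanSpace ℝ (Fin p)) : ℝ :=
  J x₁ - J x₂ - ⟪u, x₁ - x₂⟫

theorem breg_add_breg_swap {p : ℕ} (J : EuclideanSpace ℝ (Fin p) → ℝ)
    (u v x₁ x₂ : EuclideanSpace ℝ (Fin p)) :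
    Breg J u x₁ x₂ + Breg J v x₂ x₁ = ⟪v - u, x₁ - x₂⟫ := by
  simp only [Breg, inner_sub_left, inner_sub_right]
  ring

theorem dual_velocity_inner_eq_neg_symmetric_bregman_general {p d : ℕ}
    (A : EuclideanSpace ℝ (Fin p) →L[ℝ] EuclideanSpace ℝ (Fin d))
    (J : EuclideanSpace ℝ (Fin p) → ℝ) (f : EuclideanSpace ℝ (Fin d))
    (x xb : EuclideanSpace ℝ (Fin p)) (y yb : EuclideanSpace ℝ (Fin d))
    (hfeas : A xb = f) :
    ⟪A x - f, y - yb⟫ =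
      -(Breg J (-(ContinuousLinearMap.adjoint A yb)) x xb +
        Breg J (-(ContinuousLinearMap.adjoint A y)) xb x) := by
  subst hfeas
  rw [breg_add_breg_swap, neg_sub_neg, ← map_sub (ContinuousLinearMap.adjoint A),
    ContinuousLinearMap.adjoint_inner_left,
    map_sub, real_inner_comm, ← inner_neg_left, neg_sub]

/-- For `x ∈ ∂J*(-A*y)` (equivalently `-A*y ∈ ∂J(x)`) and a primal-dual solution `(x̄, ȳ)`,
the inner product of the dual velocity `Ax - f` with `y - ȳ` equals minus the symmetric
Bregman distance. -/
theorem dual_velocity_inner_eq_neg_symmetric_bregman {p d : ℕ}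
    (A : EuclideanSpace ℝ (Fin p) →L[ℝ] EuclideanSpace ℝ (Fin d))
    (J : EuclideanSpace ℝ (Fin p) → ℝ) (f : EuclideanSpace ℝ (Fin d))
    (x xb : EuclideanSpace ℝ (Fin p)) (y yb : EuclideanSpace ℝ (Fin d))
    (hx : HasSubgrad J (-(ContinuousLinearMap.adjoint A y)) x)
    (hxb : HasSubgrad J (-(ContinuousLinearMap.adjoint A yb)) xb)
    (hfeas : A xb = f) :
    ⟪A x - f, y - yb⟫ =
      -(Breg J (-(ContinuousLinearMap.adjoint A yb)) x xb +
        Breg J (-(ContinuousLinearMap.adjoint A y)) xb x) :=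
  dual_velocity_inner_eq_neg_symmetric_bregman_general A J f x xb y yb hfeas
end
end

section
/- Let −A*y ∈ ∂J(x) and −A*ȳ ∈ ∂J(x̄) with Ax̄ = f. Then D^{−A*y}(x̄, x) = D_δ(y) − D_δ(ȳ) + ⟨f − f^δ, y − ȳ⟩, where D_δ(y) = J*(−A*y) + ⟨f^δ, y⟩ is the inexact dual function. -/
open Set MeasureTheory

noncomputable section

/-- Fenchel conjugate `J*(u) = sup_z ⟨u,z⟩ - J(z)` (real-valued; correct whenever the
supremum is finite, e.g. when `u` lies in the range of `∂J`). -/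
def fenchelConj {p : ℕ} (J : EuclideanSpace ℝ (Fin p) → ℝ) (u : EuclideanSpace ℝ (Fin p)) : ℝ :=
  sSup (Set.range fun z => ⟪u, z⟫ - J z)

/-- The inexact dual function `D_δ(y) = J*(-A*y) + ⟨f^δ, y⟩`. -/
def dualFun {p d : ℕ} (J : EuclideanSpace ℝ (Fin p) → ℝ)
    (A : EuclideanSpace ℝ (Fin p) →L[ℝ] EuclideanSpace ℝ (Fin d))
    (fδ y : EuclideanSpace ℝ (Fin d)) : ℝ :=
  fenchelConj J (-(ContinuousLinearMap.adjoint A y)) + ⟪fδ, y⟫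

/-! For `u ∈ ∂J(x)` the supremum defining `J*(u)` is attained at `x` (Fenchel–Young equality),
so `D^u(x₁, x) = J(x₁) + J*(u) - ⟨u, x₁⟩`. Applied with `u = -A*y`, and once more at `(x̄, ȳ)` to
eliminate `J(x̄)`, the identity reduces via `⟨A*v, x̄⟩ = ⟨v, f⟩` to linear algebra. -/

lemma fenchelConj_eq_of_hasSubgrad {p : ℕ} {J : EuclideanSpace ℝ (Fin p) → ℝ}
    {u x : EuclideanSpace ℝ (Fin p)} (h : HasSubgrad J u x) :
    fenchelConj J u = ⟪u, x⟫ - J x := by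
  refine IsGreatest.csSup_eq ⟨⟨x, rfl⟩, ?_⟩
  rintro _ ⟨z, rfl⟩
  have hz := h z
  rw [inner_sub_right] at hz
  dsimp only
  linarith

lemma breg_eq_of_hasSubgrad {p : ℕ} {J : EuclideanSpace ℝ (Fin p) → ℝ}
    {u x : EuclideanSpace ℝ (Fin p)} (h : HasSubgrad J u x) (x₁ : EuclideanSpace ℝ (Fin p)) :
    Breg J u x₁ x = J x₁ + fenchelConj J u - ⟪u, x₁⟫ := by
  rw [Breg, fenchelConj_eq_of_hasSubgrad h, inner_sub_right]
  ring

/-- For `-A*y ∈ ∂J(x)` and a primal-dual solution `(x̄, ȳ)` (with `Ax̄ = f`), the Bregman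
divergence `D^{-A*y}(x̄, x)` equals `D_δ(y) - D_δ(ȳ) + ⟨f - f^δ, y - ȳ⟩`. -/
theorem bregman_eq_dual_gap {p d : ℕ}
    (A : EuclideanSpace ℝ (Fin p) →L[ℝ] EuclideanSpace ℝ (Fin d))
    (J : EuclideanSpace ℝ (Fin p) → ℝ) (f fδ : EuclideanSpace ℝ (Fin d))
    (x xb : EuclideanSpace ℝ (Fin p)) (y yb : EuclideanSpace ℝ (Fin d))
    (hx : HasSubgrad J (-(ContinuousLinearMap.adjoint A y)) x)
    (hxb : HasSubgrad J (-(ContinuousLinearMap.adjoint A yb)) xb)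
    (hfeas : A xb = f) :
    Breg J (-(ContinuousLinearMap.adjoint A y)) xb x =
      dualFun J A fδ y - dualFun J A fδ yb + ⟪f - fδ, y - yb⟫ := by
  rw [breg_eq_of_hasSubgrad hx, dualFun, dualFun, fenchelConj_eq_of_hasSubgrad hxb]
  have hpair : ∀ v, ⟪-(ContinuousLinearMap.adjoint A v), xb⟫ = -⟪f, v⟫ := fun v => by
    rw [inner_neg_left, ContinuousLinearMap.adjoint_inner_left, hfeas, real_inner_comm]
  rw [hpair, hpair, inner_sub_left, inner_sub_right, inner_sub_right]
  ring
end
end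

section
/- Let (x(t), y(t)) solve the dual flow: x(t) ∈ ∂J*(−A*y(t)) and ẏ(t) = Ax(t) − f^δ a.e., with ‖f^δ − f‖ ≤ δ, and let (x̄, ȳ) be a primal-dual solution. Then for all t ≥ 0, ‖y(t) − ȳ‖ ≤ ‖y(0) − ȳ‖ + δt. -/
open Set MeasureTheory

noncomputable section

set_option maxHeartbeats 1600000

/-- Along the dual subgradient flow `x(t) ∈ ∂J*(-A*y(t))`, `ẏ(t) = Ax(t) - f^δ` with noise
level `δ`, the dual distance to a dual solution grows at most linearly:
`‖y(t) - ȳ‖ ≤ ‖y(0) - ȳ‖ + δt`. -/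
theorem dual_flow_distance_bound {p d : ℕ}
    (A : EuclideanSpace ℝ (Fin p) →L[ℝ] EuclideanSpace ℝ (Fin d))
    (J : EuclideanSpace ℝ (Fin p) → ℝ) (hJ : ConvexOn ℝ Set.univ J)
    (f fδ : EuclideanSpace ℝ (Fin d)) (δ : ℝ) (hnoise : ‖fδ - f‖ ≤ δ)
    (xb : EuclideanSpace ℝ (Fin p)) (yb : EuclideanSpace ℝ (Fin d))
    (hsub : HasSubgrad J (-(ContinuousLinearMap.adjoint A yb)) xb) (hfeas : A xb = f)
    (x : ℝ → EuclideanSpace ℝ (Fin p)) (y : ℝ → EuclideanSpace ℝ (Fin d))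
    (hLip : ∃ L : NNReal, LipschitzWith L y)
    (hx : MeasureTheory.LocallyIntegrable x MeasureTheory.volume)
    (hflow : ∀ᵐ t ∂(MeasureTheory.volume.restrict (Set.Ici (0:ℝ))),
      HasDerivAt y (A (x t) - fδ) t ∧
        HasSubgrad J (-(ContinuousLinearMap.adjoint A (y t))) (x t)) :
    ∀ t : ℝ, 0 ≤ t → ‖y t - yb‖ ≤ ‖y 0 - yb‖ + δ * t := by
  classical
  obtain ⟨L, hLipW⟩ := hLip
  have hδ0 : 0 ≤ δ := le_trans (norm_nonneg _) hnoise
  set g : ℝ → ℝ := fun s => ‖y s - yb‖ with hgdef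
  set h : ℝ → ℝ := fun s => ⟪y s - yb, y s - yb⟫ with hhdef
  have hycont : Continuous y := hLipW.continuous
  have hgh : ∀ s, h s = g s ^ 2 := fun s => real_inner_self_eq_norm_sq _
  have hg0 : ∀ s, 0 ≤ g s := fun s => norm_nonneg _
  have hhcont : Continuous h :=
    Continuous.inner (hycont.sub continuous_const) (hycont.sub continuous_const)
  -- key subgradient monotonicity bound
  have key : ∀ t, HasSubgrad J (-(ContinuousLinearMap.adjoint A (y t))) (x t) →
      ⟪A (x t) - fδ, y t - yb⟫ ≤ δ * g t := by
    intro t hsubs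
    have h1 := hsubs xb
    have h2 := hsub (x t)
    have hmono : ⟪A (x t) - f, y t - yb⟫ ≤ 0 := by
      have ea : ⟪-(ContinuousLinearMap.adjoint A (y t)), xb - x t⟫
          = ⟪y t, A (x t) - f⟫ := by
        rw [inner_neg_left, ContinuousLinearMap.adjoint_inner_left, map_sub, hfeas,
          ← inner_neg_right]
        congr 1; abel
      have eb : ⟪-(ContinuousLinearMap.adjoint A yb), x t - xb⟫
          = -⟪yb, A (x t) - f⟫ := by
        rw [inner_neg_left, ContinuousLinearMap.adjoint_inner_left, map_sub, hfeas]
      rw [ea] at h1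
      rw [eb] at h2
      rw [real_inner_comm, inner_sub_left]
      linarith
    have hsplit : ⟪A (x t) - fδ, y t - yb⟫
        = ⟪A (x t) - f, y t - yb⟫ + ⟪f - fδ, y t - yb⟫ := by
      rw [← inner_add_left]
      congr 1; abel
    have hcs : ⟪f - fδ, y t - yb⟫ ≤ δ * g t := by
      calc ⟪f - fδ, y t - yb⟫ ≤ ‖f - fδ‖ * ‖y t - yb‖ := real_inner_le_norm _ _
        _ ≤ δ * g t := by
            have : ‖f - fδ‖ ≤ δ := by rwa [norm_sub_rev]
            exact mul_le_mul_of_nonneg_right this (norm_nonneg _)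
    linarith [hsplit, hcs, hmono]
  -- main estimate for every ε > 0
  have main : ∀ T, 0 ≤ T → ∀ ε : ℝ, 0 < ε →
      g T ≤ g 0 + (δ + ε) * T + ε + ((L : ℝ) + 1) * ε := by
    intro T hT ε hε
    have hflow' : ∀ᵐ s ∂(volume : Measure ℝ), s ∈ Ici (0:ℝ) →
        (HasDerivAt y (A (x s) - fδ) s ∧
          HasSubgrad J (-(ContinuousLinearMap.adjoint A (y s))) (x s)) :=
      (ae_restrict_iff' measurableSet_Ici).mp hflow
    rw [ae_iff] at hflow'
    obtain ⟨U, hUsub, hUopen, hUvol⟩ :=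
      Set.exists_isOpen_lt_of_lt _ (ENNReal.ofReal ε)
        (by rw [hflow']; exact ENNReal.ofReal_pos.mpr hε)
    have hUfin : (volume U) ≠ ⊤ := ne_top_of_lt (hUvol.trans_le le_top)
    set M : ℝ → ℝ := fun s => (volume (U ∩ Ioc 0 s)).toReal with hMdef
    have hMfin : ∀ s, volume (U ∩ Ioc 0 s) ≠ ⊤ := fun s =>
      ne_top_of_le_ne_top hUfin (measure_mono inter_subset_left)
    have hM0 : ∀ s, 0 ≤ M s := fun s => ENNReal.toReal_nonneg
    have hMmono : ∀ a b : ℝ, a ≤ b → M a ≤ M b := by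
      intro a b hab
      exact ENNReal.toReal_mono (hMfin b)
        (measure_mono (inter_subset_inter_right _ (Ioc_subset_Ioc_right hab)))
    have hMlip : ∀ a b : ℝ, a ≤ b → M b ≤ M a + (b - a) := by
      intro a b hab
      have hsub2 : U ∩ Ioc 0 b ⊆ (U ∩ Ioc 0 a) ∪ Ioc a b := by
        rintro w ⟨hwU, hw0, hwb⟩
        rcases le_or_gt w a with hwa | hwa
        · exact Or.inl ⟨hwU, hw0, hwa⟩
        · exact Or.inr ⟨hwa, hwb⟩
      have hle := (measure_mono hsub2).trans (measure_union_le (μ := volume) _ _)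
      have hfin2 : volume (U ∩ Ioc 0 a) + volume (Ioc a b) ≠ ⊤ := by
        rw [Real.volume_Ioc]
        exact ENNReal.add_ne_top.mpr ⟨hMfin a, ENNReal.ofReal_ne_top⟩
      have h' := ENNReal.toReal_mono hfin2 hle
      rw [ENNReal.toReal_add (hMfin a) (by rw [Real.volume_Ioc]; exact ENNReal.ofReal_ne_top),
        Real.volume_Ioc, ENNReal.toReal_ofReal (by linarith)] at h'
      exact h'
    have hMgrow : ∀ a b : ℝ, 0 ≤ a → a ≤ b → Ioc a b ⊆ U → M a + (b - a) ≤ M b := by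
      intro a b ha hab hsubU
      have hdisj : Disjoint (U ∩ Ioc 0 a) (Ioc a b) := by
        refine Set.disjoint_left.mpr ?_
        rintro w ⟨_, _, hwa⟩ ⟨hwa', _⟩
        exact absurd hwa (not_le.mpr hwa')
      have hsub3 : (U ∩ Ioc 0 a) ∪ Ioc a b ⊆ U ∩ Ioc 0 b := by
        rintro w (⟨hwU, hw0, hwa⟩ | hw)
        · exact ⟨hwU, hw0, hwa.trans hab⟩
        · exact ⟨hsubU hw, ha.trans_lt hw.1, hw.2⟩
      have hle := measure_mono (μ := volume) hsub3
      rw [measure_union (μ := volume) hdisj measurableSet_Ioc] at hle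
      have h' := ENNReal.toReal_mono (hMfin b) hle
      rw [ENNReal.toReal_add (hMfin a) (by rw [Real.volume_Ioc]; exact ENNReal.ofReal_ne_top),
        Real.volume_Ioc, ENNReal.toReal_ofReal (by linarith)] at h'
      exact h'
    have hMcont : Continuous M := by
      have key2 : ∀ a b : ℝ, a ≤ b → |M a - M b| ≤ |a - b| := by
        intro a b hab
        have h1 := hMmono a b hab
        have h2 := hMlip a b hab
        rw [abs_sub_comm a b, abs_of_nonneg (by linarith : (0:ℝ) ≤ b - a),
          abs_of_nonpos (by linarith : M a - M b ≤ 0)]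
        linarith
      refine (LipschitzWith.of_dist_le_mul (K := 1) fun a b => ?_).continuous
      rw [Real.dist_eq, Real.dist_eq, NNReal.coe_one, one_mul]
      rcases le_total a b with hab | hab
      · exact key2 a b hab
      · rw [abs_sub_comm (M a), abs_sub_comm a]
        exact key2 b a hab
    set K : ℝ := (L : ℝ) + 1 with hKdef
    have hK0 : 0 ≤ K := by positivity
    set β : ℝ → ℝ := fun s => g 0 + (δ + ε) * s + ε + K * M s with hβdef
    have hβeq : ∀ s, β s = g 0 + (δ + ε) * s + ε + K * M s := fun s => rfl
    have hβpos : ∀ s, 0 ≤ s → 0 < β s := by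
      intro s hs
      have h1 : 0 ≤ K * M s := mul_nonneg hK0 (hM0 s)
      have h2 : 0 ≤ (δ + ε) * s := mul_nonneg (by linarith) hs
      rw [hβeq s]
      have := hg0 0
      linarith
    have hβcont : Continuous β := by
      apply Continuous.add
      apply Continuous.add
      apply Continuous.add continuous_const
      · exact continuous_const.mul continuous_id
      · exact continuous_const
      · exact continuous_const.mul hMcont
    set S : Set ℝ := {s | h s ≤ β s ^ 2} with hSdef
    have hclosed : IsClosed (S ∩ Icc 0 T) :=
      (isClosed_le hhcont (hβcont.pow 2)).inter isClosed_Icc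
    have h0S : (0 : ℝ) ∈ S := by
      have hb0 : g 0 ≤ β 0 := by
        rw [hβeq 0]
        have h1 : 0 ≤ K * M 0 := mul_nonneg hK0 (hM0 0)
        have h2 : (δ + ε) * (0:ℝ) = 0 := mul_zero _
        linarith
      show h 0 ≤ β 0 ^ 2
      rw [hgh 0]
      exact pow_le_pow_left₀ (hg0 0) hb0 2
    have hstep : ∀ s ∈ S ∩ Ico 0 T, ∀ z' ∈ Ioi s, (S ∩ Ioc s z').Nonempty := by
      rintro s ⟨hsS, hs0, hsT⟩ z' hz'
      have hsS' : h s ≤ β s ^ 2 := hsS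
      have hβs := hβpos s hs0
      have hgs : g s ≤ β s := by
        have hsq : g s ^ 2 ≤ β s ^ 2 := by rw [← hgh s]; exact hsS'
        nlinarith [hg0 s]
      by_cases hU : s ∈ U
      · obtain ⟨η, hη, hball⟩ := Metric.isOpen_iff.mp hUopen s hU
        refine ⟨min z' (s + η / 2), ?_, lt_min hz' (by linarith), min_le_left _ _⟩
        set z := min z' (s + η / 2) with hzdef
        have hsz : s < z := lt_min hz' (by linarith)
        have hzU : Ioc s z ⊆ U := by
          rintro w ⟨hw1, hw2⟩
          apply hball
          rw [Metric.mem_ball, Real.dist_eq, abs_of_pos (by linarith)]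
          have : w ≤ s + η / 2 := hw2.trans (min_le_right _ _)
          linarith
        have hgz : g z ≤ g s + (L : ℝ) * (z - s) := by
          have hd : dist (y z) (y s) ≤ (L : ℝ) * dist z s := hLipW.dist_le_mul z s
          have hn : g z - g s ≤ ‖(y z - yb) - (y s - yb)‖ := norm_sub_norm_le _ _
          have he : (y z - yb) - (y s - yb) = y z - y s := by abel
          rw [he] at hn
          rw [dist_eq_norm, Real.dist_eq, abs_of_pos (by linarith)] at hd
          linarith
        have hβz : g s + (L : ℝ) * (z - s) ≤ β z := by
          have e : β z = β s + (δ + ε) * (z - s) + K * (M z - M s) := by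
            rw [hβeq z, hβeq s]; ring
          have hm := hMgrow s z hs0 hsz.le hzU
          have h2 : 0 ≤ (δ + ε) * (z - s) := mul_nonneg (by linarith) (by linarith)
          have h3 : K * (z - s) ≤ K * (M z - M s) :=
            mul_le_mul_of_nonneg_left (by linarith) hK0
          have h4 : K * (z - s) = (L : ℝ) * (z - s) + (z - s) := by rw [hKdef]; ring
          have h5 : (0:ℝ) ≤ z - s := by linarith
          linarith
        show h z ≤ β z ^ 2
        rw [hgh z]
        exact pow_le_pow_left₀ (hg0 z) (hgz.trans hβz) 2
      · -- good point
        have hP : HasDerivAt y (A (x s) - fδ) s ∧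
            HasSubgrad J (-(ContinuousLinearMap.adjoint A (y s))) (x s) := by
          by_contra hc
          exact hU (hUsub (by simp only [mem_setOf_eq]; intro h'; exact hc (h' hs0)))
        obtain ⟨hdy, hsubs⟩ := hP
        have hinner := key s hsubs
        have hD : HasDerivAt h
            (⟪y s - yb, A (x s) - fδ⟫ + ⟪A (x s) - fδ, y s - yb⟫) s := by
          have h1 : HasDerivAt (fun w => y w - yb) (A (x s) - fδ) s := hdy.sub_const yb
          exact h1.inner ℝ h1
        have hDle : ⟪y s - yb, A (x s) - fδ⟫ + ⟪A (x s) - fδ, y s - yb⟫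
            < 2 * (δ + ε) * β s := by
          have hc : ⟪y s - yb, A (x s) - fδ⟫ = ⟪A (x s) - fδ, y s - yb⟫ :=
            real_inner_comm _ _
          have ha1 : δ * g s ≤ δ * β s := mul_le_mul_of_nonneg_left hgs hδ0
          have ha2 : 0 < ε * β s := mul_pos hε hβs
          have ha3 : 2 * (δ + ε) * β s = 2 * (δ * β s) + 2 * (ε * β s) := by ring
          linarith [hinner]
        have hslope := hasDerivAt_iff_tendsto_slope.mp hD
        have hev : ∀ᶠ w in nhdsWithin s (Ioi s), slope h s w < 2 * (δ + ε) * β s := by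
          have h1 : ∀ᶠ w in nhdsWithin s ({s}ᶜ), slope h s w < 2 * (δ + ε) * β s :=
            hslope.eventually_lt_const hDle
          exact h1.filter_mono (nhdsWithin_mono s fun w hw => ne_of_gt hw)
        have hmem : Ioc s z' ∈ nhdsWithin s (Ioi s) :=
          Ioc_mem_nhdsGT_of_mem ⟨le_rfl, hz'⟩
        obtain ⟨z, hzs, hz2⟩ := (hev.and hmem).exists
        refine ⟨z, ?_, hz2⟩
        have hsz : s < z := hz2.1
        rw [slope_def_field, div_lt_iff₀ (by linarith)] at hzs
        have hβmono : β s + (δ + ε) * (z - s) ≤ β z := by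
          have e : β z = β s + (δ + ε) * (z - s) + K * (M z - M s) := by
            rw [hβeq z, hβeq s]; ring
          have h3 : 0 ≤ K * (M z - M s) :=
            mul_nonneg hK0 (by linarith [hMmono s z hsz.le])
          linarith
        show h z ≤ β z ^ 2
        have hq0 : 0 ≤ (δ + ε) * (z - s) := mul_nonneg (by linarith) (by linarith)
        have step1 : h z ≤ β s ^ 2 + 2 * (δ + ε) * β s * (z - s) := by linarith
        have step2 : β s ^ 2 + 2 * (δ + ε) * β s * (z - s)
            ≤ (β s + (δ + ε) * (z - s)) ^ 2 := by nlinarith [sq_nonneg ((δ + ε) * (z - s))]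
        have step3 : (β s + (δ + ε) * (z - s)) ^ 2 ≤ β z ^ 2 :=
          pow_le_pow_left₀ (by linarith [hβs.le]) hβmono 2
        linarith
    have hTS : T ∈ S := (hclosed.Icc_subset_of_forall_exists_gt h0S hstep)
      (right_mem_Icc.mpr hT)
    have hgT : g T ≤ β T := by
      have h1 : g T ^ 2 ≤ β T ^ 2 := by rw [← hgh T]; exact hTS
      nlinarith [hg0 T, hβpos T hT]
    have hMT : M T ≤ ε := by
      have h1 : M T ≤ (volume U).toReal :=
        ENNReal.toReal_mono hUfin (measure_mono inter_subset_left)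
      have h2 : (volume U).toReal ≤ ε :=
        ENNReal.toReal_le_of_le_ofReal hε.le hUvol.le
      linarith
    have hfin : β T ≤ g 0 + (δ + ε) * T + ε + K * ε := by
      rw [hβeq T]
      have : K * M T ≤ K * ε := mul_le_mul_of_nonneg_left hMT hK0
      linarith
    calc g T ≤ β T := hgT
      _ ≤ g 0 + (δ + ε) * T + ε + K * ε := hfin
  -- conclude
  intro t ht
  show g t ≤ g 0 + δ * t
  by_contra hcon
  push_neg at hcon
  set C : ℝ := t + 2 + (L : ℝ) with hCdef
  have hC : 0 < C := by positivity
  set ε : ℝ := (g t - (g 0 + δ * t)) / (2 * C) with hεdef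
  have hε : 0 < ε := by
    apply div_pos (by linarith) (by linarith)
  have hmain := main t ht ε hε
  have hεC : ε * C = (g t - (g 0 + δ * t)) / 2 := by
    rw [hεdef]
    field_simp
  have hexp : (δ + ε) * t + ε + ((L : ℝ) + 1) * ε = δ * t + ε * C := by
    rw [hCdef]; ring
  linarith
end
end

section
/- Under the dual flow x(t) ∈ ∂J*(−A*y(t)), ẏ(t) = Ax(t) − f^δ, with ‖f^δ − f‖ ≤ δ and primal-dual solution (x̄, ȳ), it holds for all t ≥ 0 that ∫₀ᵗ (D^{−A*ȳ}(x(s), x̄) + D^{−A*y(s)}(x̄, x(s))) ds ≤ ‖y(0) − ȳ‖²/2 + ‖y(0) − ȳ‖ δ t + (δt)²/2. -/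
open Set MeasureTheory

noncomputable section

section Aux

open Filter Function intervalIntegral
open scoped Topology ENNReal Interval NNReal Classical

theorem mySub_le_integral {g' g φ : ℝ → ℝ} {a b : ℝ} (hab : a ≤ b)
    (hcont : ContinuousOn g (Icc a b))
    (hslope : ∀ x ∈ Ico a b, ∀ y, g' x < y → ∀ᶠ u in 𝓝[>] x, g u - g x ≤ (u - x) * y)
    (φint : IntegrableOn φ (Icc a b)) (hφg : ∀ x ∈ Ico a b, g' x ≤ φ x) :
    g b - g a ≤ ∫ y in a..b, φ y := by
  refine le_of_forall_pos_le_add fun ε εpos => ?_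
  rcases exists_lt_lowerSemicontinuous_integral_lt φ φint εpos with
    ⟨G', f_lt_G', G'cont, G'int, G'lt_top, hG'⟩
  set s := {t | g t - g a ≤ ∫ u in a..t, (G' u).toReal} ∩ Icc a b
  have s_closed : IsClosed s := by
    have : ContinuousOn (fun t => (g t - g a, ∫ u in a..t, (G' u).toReal)) (Icc a b) := by
      rw [← uIcc_of_le hab] at G'int hcont ⊢
      exact (hcont.sub continuousOn_const).prodMk (continuousOn_primitive_interval G'int)
    simp only [s, inter_comm]
    exact this.preimage_isClosed_of_isClosed isClosed_Icc OrderClosedTopology.isClosed_le'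
  have main : Icc a b ⊆ {t | g t - g a ≤ ∫ u in a..t, (G' u).toReal} := by
    refine s_closed.Icc_subset_of_forall_exists_gt
      (by simp only [integral_same, mem_setOf_eq, sub_self, le_rfl]) fun t ht v t_lt_v => ?_
    obtain ⟨y, g'_lt_y', y_lt_G'⟩ : ∃ y : ℝ, (g' t : EReal) < y ∧ (y : EReal) < G' t :=
      EReal.lt_iff_exists_real_btwn.1 ((EReal.coe_le_coe_iff.2 (hφg t ht.2)).trans_lt (f_lt_G' t))
    have I1 : ∀ᶠ u in 𝓝[>] t, (u - t) * y ≤ ∫ w in t..u, (G' w).toReal := by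
      have B : ∀ᶠ u in 𝓝 t, (y : EReal) < G' u := G'cont.lowerSemicontinuousAt _ _ y_lt_G'
      rcases mem_nhds_iff_exists_Ioo_subset.1 B with ⟨m, M, ⟨hm, hM⟩, H⟩
      have : Ioo t (min M b) ∈ 𝓝[>] t := Ioo_mem_nhdsGT (lt_min hM ht.right.right)
      filter_upwards [this] with u hu
      have I : Icc t u ⊆ Icc a b := Icc_subset_Icc ht.2.1 (hu.2.le.trans (min_le_right _ _))
      calc
        (u - t) * y = ∫ _ in Icc t u, y := by
          simp only [hu.left.le, MeasureTheory.integral_const, smul_eq_mul, measureReal_def, sub_nonneg,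
            MeasurableSet.univ, Real.volume_Icc, Measure.restrict_apply, univ_inter,
            ENNReal.toReal_ofReal]
        _ ≤ ∫ w in t..u, (G' w).toReal := by
          rw [intervalIntegral.integral_of_le hu.1.le, ← integral_Icc_eq_integral_Ioc]
          apply setIntegral_mono_ae_restrict
          · exact integrableOn_const (by simp [Real.volume_Icc])
          · exact IntegrableOn.mono_set G'int I
          · have C1 : ∀ᵐ x : ℝ ∂volume.restrict (Icc t u), G' x < ∞ :=
              ae_mono (Measure.restrict_mono I le_rfl) G'lt_top
            have C2 : ∀ᵐ x : ℝ ∂volume.restrict (Icc t u), x ∈ Icc t u :=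
              ae_restrict_mem measurableSet_Icc
            filter_upwards [C1, C2] with x G'x hx
            apply EReal.coe_le_coe_iff.1
            have : x ∈ Ioo m M := by
              simp only [hm.trans_le hx.left,
                (hx.right.trans_lt hu.right).trans_le (min_le_left M b), mem_Ioo, and_self_iff]
            refine (H this).out.le.trans_eq ?_
            exact (EReal.coe_toReal G'x.ne (f_lt_G' x).ne_bot).symm
    have I2 : ∀ᶠ u in 𝓝[>] t, g u - g t ≤ (u - t) * y := by
      have g'_lt_y : g' t < y := EReal.coe_lt_coe_iff.1 g'_lt_y'
      exact hslope t ⟨ht.2.1, ht.2.2⟩ y g'_lt_y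
    have I3 : ∀ᶠ u in 𝓝[>] t, g u - g t ≤ ∫ w in t..u, (G' w).toReal := by
      filter_upwards [I1, I2] with u hu1 hu2 using hu2.trans hu1
    have I4 : ∀ᶠ u in 𝓝[>] t, u ∈ Ioc t (min v b) := by
      refine mem_nhdsGT_iff_exists_Ioc_subset.2 ⟨min v b, ?_, Subset.rfl⟩
      simp only [lt_min_iff, mem_Ioi]
      exact ⟨t_lt_v, ht.2.2⟩
    rcases (I3.and I4).exists with ⟨x, hx, h'x⟩
    refine ⟨x, ?_, Ioc_subset_Ioc le_rfl (min_le_left _ _) h'x⟩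
    calc
      g x - g a = g t - g a + (g x - g t) := by abel
      _ ≤ (∫ w in a..t, (G' w).toReal) + ∫ w in t..x, (G' w).toReal := add_le_add ht.1 hx
      _ = ∫ w in a..x, (G' w).toReal := by
        apply intervalIntegral.integral_add_adjacent_intervals
        · rw [intervalIntegrable_iff_integrableOn_Ioc_of_le ht.2.1]
          exact IntegrableOn.mono_set G'int
            (Ioc_subset_Icc_self.trans (Icc_subset_Icc le_rfl ht.2.2.le))
        · rw [intervalIntegrable_iff_integrableOn_Ioc_of_le h'x.1.le]
          apply IntegrableOn.mono_set G'int
          exact Ioc_subset_Icc_self.trans (Icc_subset_Icc ht.2.1 (h'x.2.trans (min_le_right _ _)))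
  calc
    g b - g a ≤ ∫ y in a..b, (G' y).toReal := main (right_mem_Icc.2 hab)
    _ ≤ (∫ y in a..b, φ y) + ε := by
      refine (le_of_eq ?_).trans (hG'.le.trans (le_of_eq ?_)) <;>
        · rw [intervalIntegral.integral_of_le hab]
          simp only [integral_Icc_eq_integral_Ioc', Real.volume_singleton]

theorem lip_sub_le_integral {g φ : ℝ → ℝ} {a b : ℝ} {K : NNReal} (hab : a ≤ b)
    (hg : LipschitzOnWith K g (Icc a b))
    (φint : IntegrableOn φ (Icc a b))
    (hae : ∀ᵐ s ∂(volume.restrict (Ico a b)), ∃ d, HasDerivAt g d s ∧ d ≤ φ s) :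
    g b - g a ≤ ∫ s in a..b, φ s := by
  set T : Set ℝ := {s | ¬ ∃ d, HasDerivAt g d s ∧ d ≤ φ s} with hT
  have hT0 : volume (T ∩ Ico a b) = 0 := by
    rw [ae_iff] at hae
    rwa [Measure.restrict_apply' measurableSet_Ico] at hae
  obtain ⟨N, hTN, hNmeas, hN0⟩ := exists_measurable_superset_of_null hT0
  set φt : ℝ → ℝ := fun s => if s ∈ N then (K : ℝ) else φ s with hφt
  have hNae : ∀ᵐ s ∂(volume : Measure ℝ), s ∉ N := by
    rw [ae_iff]; simpa using hN0
  have hcongr : ∀ᵐ s ∂(volume : Measure ℝ), φt s = φ s := by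
    filter_upwards [hNae] with s hs
    simp [hφt, hs]
  have φtint : IntegrableOn φt (Icc a b) := by
    exact φint.congr (ae_restrict_of_ae (hcongr.mono fun s h => h.symm))
  set g'' : ℝ → ℝ := fun s =>
    if h : ∃ d, HasDerivAt g d s ∧ d ≤ φt s then h.choose else (K : ℝ) with hg''
  have hgood : ∀ s ∈ Ico a b, s ∉ N → ∃ d, HasDerivAt g d s ∧ d ≤ φt s := by
    intro s hs hsN
    have hsT : s ∉ T := fun h => hsN (hTN ⟨h, hs⟩)
    rw [hT, mem_setOf_eq, not_not] at hsT
    obtain ⟨d, hd, hdφ⟩ := hsT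
    exact ⟨d, hd, by simpa [hφt, hsN] using hdφ⟩
  have hφg : ∀ s ∈ Ico a b, g'' s ≤ φt s := by
    intro s hs
    by_cases h : ∃ d, HasDerivAt g d s ∧ d ≤ φt s
    · simp only [hg'', dif_pos h]
      exact h.choose_spec.2
    · have hsN : s ∈ N := by
        by_contra hsN
        exact h (hgood s hs hsN)
      have hK : g'' s = (K:ℝ) := by simp only [hg'', dif_neg h]
      have hφK : φt s = (K:ℝ) := by simp only [hφt, if_pos hsN]
      rw [hK, hφK]
  have hslope : ∀ s ∈ Ico a b, ∀ y, g'' s < y →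
      ∀ᶠ u in 𝓝[>] s, g u - g s ≤ (u - s) * y := by
    intro s hs y hy
    by_cases h : ∃ d, HasDerivAt g d s ∧ d ≤ φt s
    · simp only [hg'', dif_pos h] at hy
      have hd := h.choose_spec.1
      have := (hd.hasDerivWithinAt (s := Ioi s)).limsup_slope_le' (notMem_Ioi.2 le_rfl) hy
      filter_upwards [this, self_mem_nhdsWithin] with u hu hsu
      rw [slope_def_field] at hu
      have hus : (0:ℝ) < u - s := sub_pos.2 hsu
      rw [div_lt_iff₀ hus] at hu
      nlinarith
    · simp only [hg'', dif_neg h] at hy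
      have hmem : Ioo s b ∈ 𝓝[>] s := Ioo_mem_nhdsGT_of_mem ⟨le_rfl, hs.2⟩
      filter_upwards [hmem] with u hu
      have hus : (0:ℝ) < u - s := sub_pos.2 hu.1
      have h1 : dist (g u) (g s) ≤ (K:ℝ) * dist u s :=
        hg.dist_le_mul u ⟨hs.1.trans hu.1.le, hu.2.le⟩ s ⟨hs.1, (hs.2.le)⟩
      rw [Real.dist_eq, Real.dist_eq, abs_of_pos hus] at h1
      have h2 : g u - g s ≤ |g u - g s| := le_abs_self _
      nlinarith
  have key := mySub_le_integral hab hg.continuousOn hslope φtint hφg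
  have : ∫ s in a..b, φt s = ∫ s in a..b, φ s := by
    apply intervalIntegral.integral_congr_ae
    filter_upwards [hcongr] with s h _
    exact h
  linarith [key, this.le, this.ge]

theorem lip_integral_le_sub {g φ : ℝ → ℝ} {a b : ℝ} {K : NNReal} (hab : a ≤ b)
    (hg : LipschitzOnWith K g (Icc a b))
    (φint : IntegrableOn φ (Icc a b))
    (hae : ∀ᵐ s ∂(volume.restrict (Ico a b)), ∃ d, HasDerivAt g d s ∧ φ s ≤ d) :
    (∫ s in a..b, φ s) ≤ g b - g a := by
  have hgneg : LipschitzOnWith K (fun s => -g s) (Icc a b) := by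
    intro u hu v hv
    simpa [edist_comm, edist_dist, dist_neg_neg] using hg hu hv
  have := lip_sub_le_integral (φ := fun s => -φ s) hab hgneg φint.neg ?_
  · rw [intervalIntegral.integral_neg] at this
    linarith
  · filter_upwards [hae] with s ⟨d, hd, hdφ⟩
    exact ⟨-d, hd.neg, by linarith⟩

end Aux

set_option maxHeartbeats 1600000 in
/-- Along the dual subgradient flow with noise level `δ`, the integral of the symmetric
Bregman distance is bounded:
`∫₀ᵗ (D^{-A*ȳ}(x(s), x̄) + D^{-A*y(s)}(x̄, x(s))) ds ≤ ‖y(0)-ȳ‖²/2 + ‖y(0)-ȳ‖δt + (δt)²/2`. -/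
theorem dual_flow_integral_bregman_bound {p d : ℕ}
    (A : EuclideanSpace ℝ (Fin p) →L[ℝ] EuclideanSpace ℝ (Fin d))
    (J : EuclideanSpace ℝ (Fin p) → ℝ) (hJ : ConvexOn ℝ Set.univ J)
    (f fδ : EuclideanSpace ℝ (Fin d)) (δ : ℝ) (hnoise : ‖fδ - f‖ ≤ δ)
    (xb : EuclideanSpace ℝ (Fin p)) (yb : EuclideanSpace ℝ (Fin d))
    (hsub : HasSubgrad J (-(ContinuousLinearMap.adjoint A yb)) xb) (hfeas : A xb = f)
    (x : ℝ → EuclideanSpace ℝ (Fin p)) (y : ℝ → EuclideanSpace ℝ (Fin d))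
    (hLip : ∃ L : NNReal, LipschitzWith L y)
    (hx : MeasureTheory.LocallyIntegrable x MeasureTheory.volume)
    (hflow : ∀ᵐ t ∂(MeasureTheory.volume.restrict (Set.Ici (0:ℝ))),
      HasDerivAt y (A (x t) - fδ) t ∧
        HasSubgrad J (-(ContinuousLinearMap.adjoint A (y t))) (x t)) :
    ∀ t : ℝ, 0 ≤ t →
      (∫ s in (0:ℝ)..t,
          (Breg J (-(ContinuousLinearMap.adjoint A yb)) (x s) xb +
            Breg J (-(ContinuousLinearMap.adjoint A (y s))) xb (x s))) ≤
        ‖y 0 - yb‖ ^ 2 / 2 + ‖y 0 - yb‖ * δ * t + (δ * t) ^ 2 / 2 := by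

  intro t ht
  obtain ⟨L, hL⟩ := hLip
  have hycont : Continuous y := hL.continuous
  have hδ : 0 ≤ δ := (norm_nonneg _).trans hnoise
  set r0 : ℝ := ‖y 0 - yb‖ with hr0
  have hr0n : 0 ≤ r0 := norm_nonneg _
  set h1 : ℝ → ℝ := fun s => ⟪yb - y s, A (x s) - fδ⟫ with hh1
  set h2 : ℝ → ℝ := fun s => ⟪yb - y s, fδ - f⟫ with hh2
  -- pointwise algebraic identity for the Bregman sum
  have hBreg : ∀ s, Breg J (-(ContinuousLinearMap.adjoint A yb)) (x s) xb +
      Breg J (-(ContinuousLinearMap.adjoint A (y s))) xb (x s) = h1 s + h2 s := by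
    intro s
    have hsum : (A (x s) - fδ) + (fδ - f) = A (x s) - f := by abel
    have hid : h1 s + h2 s = ⟪yb - y s, A (x s) - f⟫ := by
      simp only [hh1, hh2, ← inner_add_right, hsum]
    rw [hid]
    simp only [Breg, inner_neg_left, ContinuousLinearMap.adjoint_inner_left,
      inner_sub_left, inner_sub_right, map_sub, hfeas]
    ring
  -- basic bound for ‖y s - yb‖ on [0, t]
  have hybd : ∀ s ∈ Icc (0:ℝ) t, ‖y s - yb‖ ≤ r0 + L * t := by
    intro s hs
    have e : y s - yb = (y s - y 0) + (y 0 - yb) := by abel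
    have h1' : ‖y s - yb‖ ≤ ‖y s - y 0‖ + ‖y 0 - yb‖ := by rw [e]; exact norm_add_le _ _
    have h2' : dist (y s) (y 0) ≤ L * dist s 0 := hL.dist_le_mul s 0
    rw [Real.dist_eq, sub_zero, abs_of_nonneg hs.1] at h2'
    have h3' : (L:ℝ) * s ≤ L * t := mul_le_mul_of_nonneg_left hs.2 L.coe_nonneg
    rw [dist_eq_norm] at h2'
    rw [hr0]
    linarith
  -- integrability
  have hxint : IntegrableOn x (Icc (0:ℝ) t) := hx.integrableOn_isCompact isCompact_Icc
  have hAx : IntegrableOn (fun s => A (x s) - fδ) (Icc (0:ℝ) t) :=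
    (A.integrable_comp hxint).sub (integrableOn_const measure_Icc_lt_top.ne)
  have hyc : Continuous fun s => yb - y s := continuous_const.sub hycont
  have h1m : AEStronglyMeasurable h1 (volume.restrict (Icc (0:ℝ) t)) :=
    AEStronglyMeasurable.inner hyc.aestronglyMeasurable hAx.aestronglyMeasurable
  have h1int : IntegrableOn h1 (Icc (0:ℝ) t) := by
    refine Integrable.mono' (hAx.norm.const_mul (r0 + L * t)) h1m ?_
    filter_upwards [ae_restrict_mem measurableSet_Icc] with s hs
    have hb1 : ‖h1 s‖ ≤ ‖yb - y s‖ * ‖A (x s) - fδ‖ := norm_inner_le_norm _ _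
    have hby : ‖yb - y s‖ ≤ r0 + L * t := by rw [norm_sub_rev]; exact hybd s hs
    calc ‖h1 s‖ ≤ ‖yb - y s‖ * ‖A (x s) - fδ‖ := hb1
      _ ≤ (r0 + L * t) * ‖A (x s) - fδ‖ :=
        mul_le_mul_of_nonneg_right hby (norm_nonneg _)
  have h2cont : Continuous h2 := hyc.inner continuous_const
  have h2int : IntegrableOn h2 (Icc (0:ℝ) t) := h2cont.integrableOn_Icc
  -- restrict flow to Ico 0 t
  have hflow' : ∀ᵐ s ∂(volume.restrict (Ico (0:ℝ) t)),
      HasDerivAt y (A (x s) - fδ) s ∧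
        HasSubgrad J (-(ContinuousLinearMap.adjoint A (y s))) (x s) :=
    ae_restrict_of_ae_restrict_of_subset (fun s hs => hs.1) hflow
  set Φ : ℝ → ℝ := fun s => ‖y s - yb‖ ^ 2 / 2 with hΦ
  -- a.e. key facts
  have hKey : ∀ᵐ s ∂(volume.restrict (Ico (0:ℝ) t)),
      HasDerivAt Φ (-(h1 s)) s ∧ -(h1 s) ≤ δ * ‖y s - yb‖ := by
    filter_upwards [hflow'] with s hsfl
    obtain ⟨hdy, hsg⟩ := hsfl
    constructor
    · have hsub' : HasDerivAt (fun u => y u - yb) (A (x s) - fδ) s := hdy.sub_const yb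
      have hiner := HasDerivAt.inner ℝ hsub' hsub'
      have h2' := hiner.div_const 2
      have heq : Φ = fun u => (⟪y u - yb, y u - yb⟫ : ℝ) / 2 := by
        funext u
        simp only [hΦ, real_inner_self_eq_norm_sq]
      rw [heq]
      refine h2'.congr_deriv ?_
      have hc : ⟪A (x s) - fδ, y s - yb⟫ = ⟪y s - yb, A (x s) - fδ⟫ := real_inner_comm _ _
      have hyy : yb - y s = -(y s - yb) := by abel
      rw [hh1]
      simp only [hyy, inner_neg_left, hc]
      ring
    · have hB1 : 0 ≤ Breg J (-(ContinuousLinearMap.adjoint A yb)) (x s) xb := by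
        have := hsub (x s); rw [Breg]; linarith
      have hB2 : 0 ≤ Breg J (-(ContinuousLinearMap.adjoint A (y s))) xb (x s) := by
        have := hsg xb; rw [Breg]; linarith
      have hpos : 0 ≤ h1 s + h2 s := by rw [← hBreg s]; linarith
      have hcs : h2 s ≤ ‖yb - y s‖ * ‖fδ - f‖ := real_inner_le_norm _ _
      have hc2 : ‖yb - y s‖ * ‖fδ - f‖ ≤ ‖y s - yb‖ * δ := by
        rw [norm_sub_rev yb]
        exact mul_le_mul_of_nonneg_left hnoise (norm_nonneg _)
      nlinarith
  -- Gronwall-type bound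
  have hr : ∀ s ∈ Icc (0:ℝ) t, ‖y s - yb‖ ≤ r0 + δ * s := by
    intro s hs
    refine le_of_forall_pos_le_add fun ε εpos => ?_
    set gε : ℝ → ℝ := fun u => Real.sqrt (2 * Φ u + ε ^ 2) with hgε
    have hgval : ∀ u, gε u = Real.sqrt (‖y u - yb‖ ^ 2 + ε ^ 2) := by
      intro u
      simp only [hgε, hΦ]
      congr 1
      ring
    have hrle : ∀ u, ‖y u - yb‖ ≤ gε u := by
      intro u
      rw [hgval]
      calc ‖y u - yb‖ = Real.sqrt (‖y u - yb‖ ^ 2) := (Real.sqrt_sq (norm_nonneg _)).symm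
        _ ≤ Real.sqrt (‖y u - yb‖ ^ 2 + ε ^ 2) := Real.sqrt_le_sqrt (by nlinarith)
    have hglip : LipschitzOnWith L gε (Icc (0:ℝ) s) := by
      rw [lipschitzOnWith_iff_dist_le_mul]
      intro u _ v _
      have hyL : dist (y u) (y v) ≤ L * dist u v := hL.dist_le_mul u v
      set pu := ‖y u - yb‖ with hpu
      set pv := ‖y v - yb‖ with hpv
      have hpun : 0 ≤ pu := norm_nonneg _
      have hpvn : 0 ≤ pv := norm_nonneg _
      have sqa : Real.sqrt (pu ^ 2 + ε ^ 2) ^ 2 = pu ^ 2 + ε ^ 2 :=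
        Real.sq_sqrt (by positivity)
      have sqb : Real.sqrt (pv ^ 2 + ε ^ 2) ^ 2 = pv ^ 2 + ε ^ 2 :=
        Real.sq_sqrt (by positivity)
      set au := Real.sqrt (pu ^ 2 + ε ^ 2) with hau
      set av := Real.sqrt (pv ^ 2 + ε ^ 2) with hav
      have haun : 0 ≤ au := Real.sqrt_nonneg _
      have havn : 0 ≤ av := Real.sqrt_nonneg _
      have haug : pu ≤ au := by
        rw [hau]
        calc pu = Real.sqrt (pu ^ 2) := (Real.sqrt_sq hpun).symm
          _ ≤ Real.sqrt (pu ^ 2 + ε ^ 2) := Real.sqrt_le_sqrt (by nlinarith)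
      have havg : pv ≤ av := by
        rw [hav]
        calc pv = Real.sqrt (pv ^ 2) := (Real.sqrt_sq hpvn).symm
          _ ≤ Real.sqrt (pv ^ 2 + ε ^ 2) := Real.sqrt_le_sqrt (by nlinarith)
      have hcnn : 0 ≤ pu * pv + ε ^ 2 := by positivity
      have hP2 : (pu * pv + ε ^ 2) ^ 2 ≤ (au * av) ^ 2 := by
        have e : (au * av) ^ 2 = (pu ^ 2 + ε ^ 2) * (pv ^ 2 + ε ^ 2) := by
          rw [mul_pow, sqa, sqb]
        rw [e]
        nlinarith [sq_nonneg (pu - pv), sq_nonneg ε]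
      have hprod : pu * pv + ε ^ 2 ≤ au * av := by
        have h7 := Real.sqrt_le_sqrt hP2
        rwa [Real.sqrt_sq hcnn, Real.sqrt_sq (mul_nonneg haun havn)] at h7
      have sqrtineq : |au - av| ≤ |pu - pv| := by
        have hsq2 : (au - av) ^ 2 ≤ (pu - pv) ^ 2 := by nlinarith
        have h8 := Real.sqrt_le_sqrt hsq2
        rwa [Real.sqrt_sq_eq_abs, Real.sqrt_sq_eq_abs] at h8
      have hnormd : |pu - pv| ≤ dist (y u) (y v) := by
        have e : (y u - yb) - (y v - yb) = y u - y v := by abel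
        have := abs_norm_sub_norm_le (y u - yb) (y v - yb)
        rw [e] at this
        rw [dist_eq_norm]
        exact this
      calc dist (gε u) (gε v) = |au - av| := by
            rw [Real.dist_eq, hgval u, hgval v, ← hpu, ← hpv, ← hau, ← hav]
        _ ≤ |pu - pv| := sqrtineq
        _ ≤ dist (y u) (y v) := hnormd
        _ ≤ L * dist u v := hyL
    have hae' : ∀ᵐ u ∂(volume.restrict (Ico (0:ℝ) s)),
        ∃ dv, HasDerivAt gε dv u ∧ dv ≤ δ := by
      have hsub2 : Ico (0:ℝ) s ⊆ Ico 0 t := fun u hu => ⟨hu.1, lt_of_lt_of_le hu.2 hs.2⟩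
      filter_upwards [ae_restrict_of_ae_restrict_of_subset hsub2 hKey] with u hu
      obtain ⟨hdΦ, hbd⟩ := hu
      have h2Φ : 2 * Φ u + ε ^ 2 = ‖y u - yb‖ ^ 2 + ε ^ 2 := by
        simp only [hΦ]; ring
      have hposu : 2 * Φ u + ε ^ 2 ≠ 0 := by rw [h2Φ]; positivity
      have hd2 : HasDerivAt (fun v => 2 * Φ v + ε ^ 2) (2 * -(h1 u)) u :=
        (hdΦ.const_mul 2).add_const (ε ^ 2)
      have hds := hd2.sqrt hposu
      refine ⟨_, hds, ?_⟩
      have hsq : 0 < Real.sqrt (2 * Φ u + ε ^ 2) := Real.sqrt_pos.2 (by rw [h2Φ]; positivity)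
      rw [div_le_iff₀ (by positivity)]
      have h3 : ‖y u - yb‖ ≤ Real.sqrt (2 * Φ u + ε ^ 2) := by
        rw [h2Φ]
        calc ‖y u - yb‖ = Real.sqrt (‖y u - yb‖ ^ 2) := (Real.sqrt_sq (norm_nonneg _)).symm
          _ ≤ Real.sqrt (‖y u - yb‖ ^ 2 + ε ^ 2) := Real.sqrt_le_sqrt (by nlinarith)
      nlinarith [norm_nonneg (y u - yb)]
    have hmain := lip_sub_le_integral hs.1 hglip
      (integrableOn_const measure_Icc_lt_top.ne) hae'
    rw [intervalIntegral.integral_const, smul_eq_mul, sub_zero] at hmain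
    have e0 : gε 0 ≤ r0 + ε := by
      rw [hgval]
      calc Real.sqrt (‖y 0 - yb‖ ^ 2 + ε ^ 2) ≤ Real.sqrt ((r0 + ε) ^ 2) := by
            apply Real.sqrt_le_sqrt
            rw [hr0]
            nlinarith
        _ = r0 + ε := Real.sqrt_sq (by positivity)
    have hfin := hrle s
    nlinarith
  -- Lipschitz property of Φ on [0, t]
  set M : ℝ := r0 + L * t with hM
  have hMnn : 0 ≤ M := by rw [hM]; positivity
  set KΦ : NNReal := Real.toNNReal (M * L) with hKΦ
  have hKco : (KΦ : ℝ) = M * L := Real.coe_toNNReal _ (by positivity)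
  have hΦlip : LipschitzOnWith KΦ Φ (Icc (0:ℝ) t) := by
    rw [lipschitzOnWith_iff_dist_le_mul]
    intro u hu v hv
    rw [Real.dist_eq, hKco]
    have pu := hybd u hu
    have pv := hybd v hv
    have h5 : |Φ u - Φ v| ≤ |‖y u - yb‖ - ‖y v - yb‖| * M := by
      have e : Φ u - Φ v = (‖y u - yb‖ - ‖y v - yb‖) * ((‖y u - yb‖ + ‖y v - yb‖) / 2) := by
        simp only [hΦ]; ring
      rw [e, abs_mul]
      apply mul_le_mul_of_nonneg_left _ (abs_nonneg _)
      rw [abs_of_nonneg (by positivity)]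
      rw [hM]
      linarith
    have hnormd : |‖y u - yb‖ - ‖y v - yb‖| ≤ L * dist u v := by
      have e : (y u - yb) - (y v - yb) = y u - y v := by abel
      have h6 := abs_norm_sub_norm_le (y u - yb) (y v - yb)
      rw [e, ← dist_eq_norm] at h6
      exact h6.trans (hL.dist_le_mul u v)
    calc |Φ u - Φ v| ≤ |‖y u - yb‖ - ‖y v - yb‖| * M := h5
      _ ≤ (L * dist u v) * M := mul_le_mul_of_nonneg_right hnormd hMnn
      _ = M * L * dist u v := by ring
  -- first integral bound
  have hae1 : ∀ᵐ s ∂(volume.restrict (Ico (0:ℝ) t)),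
      ∃ dv, HasDerivAt Φ dv s ∧ dv ≤ -(h1 s) := by
    filter_upwards [hKey] with s hsK
    exact ⟨-(h1 s), hsK.1, le_rfl⟩
  have hInt1 : Φ t - Φ 0 ≤ ∫ s in (0:ℝ)..t, -(h1 s) :=
    lip_sub_le_integral ht hΦlip h1int.neg hae1
  rw [intervalIntegral.integral_neg] at hInt1
  have hΦt : 0 ≤ Φ t := by simp only [hΦ]; positivity
  have hΦ0 : Φ 0 = r0 ^ 2 / 2 := by simp only [hΦ, hr0]
  have hb1 : ∫ s in (0:ℝ)..t, h1 s ≤ r0 ^ 2 / 2 := by linarith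
  -- second integral bound
  have h1ii : IntervalIntegrable h1 volume 0 t := by
    apply IntegrableOn.intervalIntegrable
    rwa [uIcc_of_le ht]
  have h2ii : IntervalIntegrable h2 volume 0 t := by
    apply IntegrableOn.intervalIntegrable
    rwa [uIcc_of_le ht]
  have hpolyii : IntervalIntegrable (fun s => δ * r0 + δ * δ * s) volume 0 t :=
    ((by continuity : Continuous fun s : ℝ => δ * r0 + δ * δ * s).intervalIntegrable 0 t)
  have hb2 : ∫ s in (0:ℝ)..t, h2 s ≤ ∫ s in (0:ℝ)..t, (δ * r0 + δ * δ * s) := by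
    apply intervalIntegral.integral_mono_on ht h2ii hpolyii
    intro s hs
    have hcs : h2 s ≤ ‖yb - y s‖ * ‖fδ - f‖ := real_inner_le_norm _ _
    have hby : ‖yb - y s‖ ≤ r0 + δ * s := by rw [norm_sub_rev]; exact hr s hs
    have : ‖yb - y s‖ * ‖fδ - f‖ ≤ (r0 + δ * s) * δ :=
      mul_le_mul hby hnoise (norm_nonneg _) (add_nonneg hr0n (mul_nonneg hδ hs.1))
    nlinarith
  have hpoly : ∫ s in (0:ℝ)..t, (δ * r0 + δ * δ * s) = δ * r0 * t + δ * δ * (t ^ 2 / 2) := by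
    rw [intervalIntegral.integral_add (intervalIntegrable_const)
      ((by continuity : Continuous fun s : ℝ => δ * δ * s).intervalIntegrable 0 t)]
    rw [intervalIntegral.integral_const, intervalIntegral.integral_const_mul, integral_id]
    simp
    ring
  -- assemble
  have hcongr : (∫ s in (0:ℝ)..t,
      (Breg J (-(ContinuousLinearMap.adjoint A yb)) (x s) xb +
        Breg J (-(ContinuousLinearMap.adjoint A (y s))) xb (x s))) =
      ∫ s in (0:ℝ)..t, (h1 s + h2 s) :=
    intervalIntegral.integral_congr (fun s _ => hBreg s)
  rw [hcongr, intervalIntegral.integral_add h1ii h2ii]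
  rw [hpoly] at hb2
  nlinarith [hb1, hb2]
end
end

section
/- Let (x(t), y(t)) solve the dual subgradient flow with noise level δ, primal-dual solution (x̄, ȳ), and C₀ = ‖y(0) − ȳ‖. Define the tail average x̂(t) = (2/t)∫_{t/2}^t x(s) ds. Then for all t > 0: D^{−A*ȳ}(x̂(t), x̄) ≤ C₀²/t + 2C₀δ + δ²t. -/
open Set MeasureTheory Filter intervalIntegral

noncomputable section

/-- FTC for a locally Lipschitz function with an a.e. derivative. -/
lemma ftc_ae {g w : ℝ → ℝ} {a b K : ℝ} (hab : a ≤ b) (hK : 0 ≤ K)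
    (hgc : Continuous g)
    (hlip : ∀ u ∈ Icc a (b+1), ∀ v ∈ Icc a (b+1), |g u - g v| ≤ K * |u - v|)
    (hd : ∀ᵐ s ∂MeasureTheory.volume, s ∈ Ioc a b → HasDerivAt g (w s) s) :
    g b - g a = ∫ s in a..b, w s := by
  set h : ℕ → ℝ := fun n => 1/(n+1) with hh
  have hhpos : ∀ n, 0 < h n := fun n => by positivity
  have hh1 : ∀ n, h n ≤ 1 := fun n => by
    rw [hh]; rw [div_le_one (by positivity)]; push_cast; linarith [Nat.cast_nonneg (α := ℝ) n]
  have hh0 : Tendsto h atTop (nhds 0) := tendsto_one_div_add_atTop_nhds_zero_nat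
  set q : ℕ → ℝ → ℝ := fun n s => (g (s + h n) - g s) / h n with hq
  have hgint : ∀ c d : ℝ, IntervalIntegrable g MeasureTheory.volume c d :=
    fun c d => hgc.intervalIntegrable c d
  set Φ : ℝ → ℝ := fun c => ∫ s in a..c, g s with hΦ
  have hIn : ∀ n, ∫ s in a..b, q n s = ((Φ (b + h n) - Φ (a + h n)) - (Φ b - Φ a)) / h n := by
    intro n
    have hgs : IntervalIntegrable (fun s => g (s + h n)) MeasureTheory.volume a b :=
      (hgc.comp (continuous_id.add continuous_const)).intervalIntegrable a b
    have h1 : ∫ s in a..b, g (s + h n) = ∫ s in (a + h n)..(b + h n), g s :=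
      intervalIntegral.integral_comp_add_right g (h n)
    have h2 : ∫ s in (a + h n)..(b + h n), g s = Φ (b + h n) - Φ (a + h n) := by
      have := integral_interval_sub_left (hgint a (b + h n)) (hgint a (a + h n))
      exact this.symm
    have h3 : ∫ s in a..b, q n s = ((∫ s in a..b, g (s + h n)) - ∫ s in a..b, g s) / h n := by
      simp only [hq]
      rw [intervalIntegral.integral_div, intervalIntegral.integral_sub hgs (hgint a b)]
    have hb : (∫ s in a..b, g s) = Φ b := rfl
    have ha0 : Φ a = 0 := intervalIntegral.integral_same
    rw [h3, h1, h2, hb, ha0]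
    ring
  have hlim1 : Tendsto (fun n => ∫ s in a..b, q n s) atTop (nhds (g b - g a)) := by
    have key : ∀ n, ‖(∫ s in a..b, q n s) - (g b - g a)‖ ≤ 2*K*h n := by
      intro n
      have e1 : Φ (b + h n) - Φ b = ∫ s in b..(b + h n), g s :=
        integral_interval_sub_left (hgint a (b + h n)) (hgint a b)
      have e2 : Φ (a + h n) - Φ a = ∫ s in a..(a + h n), g s :=
        integral_interval_sub_left (hgint a (a + h n)) (hgint a a)
      have est : ∀ c, a ≤ c → c ≤ b → |(∫ s in c..(c + h n), g s) - h n * g c| ≤ K * h n * h n := by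
        intro c hac hcb
        have hsplit : (∫ s in c..(c + h n), g s) - h n * g c = ∫ s in c..(c + h n), (g s - g c) := by
          rw [intervalIntegral.integral_sub (hgint c (c + h n)) intervalIntegrable_const,
            intervalIntegral.integral_const, smul_eq_mul]
          ring
        rw [hsplit]
        have hbound : ∀ s ∈ Set.uIoc c (c + h n), ‖g s - g c‖ ≤ K * h n := by
          intro s hs
          rw [Set.uIoc_of_le (by linarith [hhpos n])] at hs
          have hs1 : c ≤ s := le_of_lt hs.1
          have hs2 : s ≤ c + h n := hs.2
          have hmem1 : s ∈ Icc a (b+1) := ⟨by linarith, by linarith [hh1 n]⟩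
          have hmem2 : c ∈ Icc a (b+1) := ⟨hac, by linarith⟩
          calc ‖g s - g c‖ = |g s - g c| := rfl
            _ ≤ K * |s - c| := hlip s hmem1 c hmem2
            _ ≤ K * h n := by
                apply mul_le_mul_of_nonneg_left _ hK
                rw [abs_of_nonneg (by linarith)]; linarith
        calc |∫ s in c..(c + h n), (g s - g c)| ≤ (K * h n) * |(c + h n) - c| :=
              intervalIntegral.norm_integral_le_of_norm_le_const hbound
          _ = K * h n * h n := by rw [add_sub_cancel_left, abs_of_pos (hhpos n)]
      have estb := est b hab le_rfl
      have esta := est a le_rfl hab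
      rw [Real.norm_eq_abs, hIn n]
      have expand : ((Φ (b + h n) - Φ (a + h n)) - (Φ b - Φ a)) / h n - (g b - g a)
          = (((∫ s in b..(b + h n), g s) - h n * g b) - ((∫ s in a..(a + h n), g s) - h n * g a)) / h n := by
        rw [← e1, ← e2]
        have hne : h n ≠ 0 := (hhpos n).ne'
        field_simp
        ring
      rw [expand, abs_div, abs_of_pos (hhpos n), div_le_iff₀ (hhpos n)]
      calc |((∫ s in b..(b + h n), g s) - h n * g b) - ((∫ s in a..(a + h n), g s) - h n * g a)|
          ≤ |(∫ s in b..(b + h n), g s) - h n * g b| + |(∫ s in a..(a + h n), g s) - h n * g a| :=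
            abs_sub _ _
        _ ≤ K * h n * h n + K * h n * h n := add_le_add estb esta
        _ = 2*K*h n * h n := by ring
    have h2K : Tendsto (fun n => 2*K*h n) atTop (nhds 0) := by
      have := hh0.const_mul (2*K); rwa [mul_zero] at this
    have hz := squeeze_zero_norm key h2K
    have h4 := hz.add (tendsto_const_nhds (x := g b - g a))
    simp only [sub_add_cancel, zero_add] at h4
    exact h4
  have hlim2 : Tendsto (fun n => ∫ s in a..b, q n s) atTop (nhds (∫ s in a..b, w s)) := by
    apply intervalIntegral.tendsto_integral_filter_of_dominated_convergence (fun _ => K)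
    · exact Filter.Eventually.of_forall fun n =>
        (((hgc.comp (continuous_id.add continuous_const)).sub hgc).div_const _).aestronglyMeasurable
    · apply Filter.Eventually.of_forall
      intro n
      apply Filter.Eventually.of_forall
      intro s hs
      rw [Set.uIoc_of_le hab] at hs
      have hmem1 : s + h n ∈ Icc a (b+1) := ⟨by linarith [hs.1.le, (hhpos n).le], by linarith [hs.2, hh1 n]⟩
      have hmem2 : s ∈ Icc a (b+1) := ⟨hs.1.le, by linarith [hs.2]⟩
      have hl := hlip (s + h n) hmem1 s hmem2
      simp only [hq, Real.norm_eq_abs, abs_div, abs_of_pos (hhpos n)]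
      rw [div_le_iff₀ (hhpos n)]
      calc |g (s + h n) - g s| ≤ K * |s + h n - s| := hl
        _ = K * h n := by rw [add_sub_cancel_left, abs_of_pos (hhpos n)]
    · exact intervalIntegrable_const
    · filter_upwards [hd] with s hds hs
      rw [Set.uIoc_of_le hab] at hs
      have hder := hds hs
      have htends : Tendsto (fun n => s + h n) atTop (nhdsWithin s {s}ᶜ) := by
        apply tendsto_nhdsWithin_of_tendsto_nhds_of_eventually_within
        · have := hh0.const_add s; rwa [add_zero] at this
        · refine Filter.Eventually.of_forall fun n => ?_
          simp only [mem_compl_iff, mem_singleton_iff]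
          intro hcon
          have := hhpos n
          linarith [hcon]
      have hcomp := (hasDerivAt_iff_tendsto_slope.mp hder).comp htends
      have heq : (fun n => q n s) = (slope g s) ∘ (fun n => s + h n) := by
        funext n
        rw [Function.comp_apply, slope_def_field, add_sub_cancel_left]
      rw [heq]
      exact hcomp
  exact tendsto_nhds_unique hlim1 hlim2

set_option maxHeartbeats 1000000 in
/-- Rate for the Lagrangian gap of the tail average `x̂(t) = (2/t)∫_{t/2}^t x(s) ds` along the
dual subgradient flow: `D^{-A*ȳ}(x̂(t), x̄) ≤ C₀²/t + 2C₀δ + δ²t` with `C₀ = ‖y(0)-ȳ‖`. -/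
theorem tail_average_bregman_rate {p d : ℕ}
    (A : EuclideanSpace ℝ (Fin p) →L[ℝ] EuclideanSpace ℝ (Fin d))
    (J : EuclideanSpace ℝ (Fin p) → ℝ) (hJ : ConvexOn ℝ Set.univ J)
    (f fδ : EuclideanSpace ℝ (Fin d)) (δ : ℝ) (hnoise : ‖fδ - f‖ ≤ δ)
    (xb : EuclideanSpace ℝ (Fin p)) (yb : EuclideanSpace ℝ (Fin d))
    (hsub : HasSubgrad J (-(ContinuousLinearMap.adjoint A yb)) xb) (hfeas : A xb = f)
    (x : ℝ → EuclideanSpace ℝ (Fin p)) (y : ℝ → EuclideanSpace ℝ (Fin d))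
    (hLip : ∃ L : NNReal, LipschitzWith L y)
    (hx : MeasureTheory.LocallyIntegrable x MeasureTheory.volume)
    (hflow : ∀ᵐ t ∂(MeasureTheory.volume.restrict (Set.Ici (0:ℝ))),
      HasDerivAt y (A (x t) - fδ) t ∧
        HasSubgrad J (-(ContinuousLinearMap.adjoint A (y t))) (x t)) :
    ∀ t : ℝ, 0 < t →
      Breg J (-(ContinuousLinearMap.adjoint A yb))
          ((2 / t) • ∫ s in (t / 2)..t, x s) xb ≤
        ‖y 0 - yb‖ ^ 2 / t + 2 * ‖y 0 - yb‖ * δ + δ ^ 2 * t := by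
  intro t ht
  obtain ⟨L, hL⟩ := hLip
  have hδ : 0 ≤ δ := le_trans (norm_nonneg _) hnoise
  have hyc : Continuous y := hL.continuous
  have hJc : Continuous J := by
    rw [← continuousOn_univ]; exact hJ.continuousOn isOpen_univ
  set u := -(ContinuousLinearMap.adjoint A yb) with hu
  set v : ℝ → EuclideanSpace ℝ (Fin d) := fun s => A (x s) - fδ with hv
  set φ : ℝ → ℝ := fun s => ‖y s - yb‖ with hφdef
  set ψ : ℝ → ℝ := fun s => φ s ^ 2 with hψdef
  set w : ℝ → ℝ := fun s => 2 * ⟪y s - yb, v s⟫ with hwdef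
  set D : ℝ → ℝ := fun s => Breg J u (x s) xb with hDdef
  set Q : ℝ → ℝ := fun s => ⟪yb - y s, A (x s) - f⟫ with hQdef
  have hφc : Continuous φ := (hyc.sub continuous_const).norm
  have hψc : Continuous ψ := hφc.pow 2
  have hφ0 : ∀ s, 0 ≤ φ s := fun s => norm_nonneg _
  have hD0 : ∀ s, 0 ≤ D s := by
    intro s
    have h1 := hsub (x s)
    simp only [hDdef, Breg]
    linarith [h1]
  have hae : ∀ᵐ s ∂(MeasureTheory.volume), s ∈ Ici (0:ℝ) →
      (HasDerivAt y (A (x s) - fδ) s ∧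
        HasSubgrad J (-(ContinuousLinearMap.adjoint A (y s))) (x s)) :=
    (ae_restrict_iff' measurableSet_Ici).mp hflow
  -- the key pointwise a.e. facts
  have key : ∀ᵐ s ∂(MeasureTheory.volume), s ∈ Ici (0:ℝ) →
      (HasDerivAt ψ (w s) s ∧ D s ≤ Q s ∧ Q s ≤ -(w s)/2 + δ * φ s ∧
        ⟪y s - yb, v s⟫ ≤ δ * φ s) := by
    filter_upwards [hae] with s hs hs0
    obtain ⟨hdy, hsg⟩ := hs hs0
    have hdv : HasDerivAt y (v s) s := hdy
    have hderiv : HasDerivAt ψ (w s) s := by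
      have h1 : HasDerivAt (fun r => y r - yb) (v s) s := hdv.sub_const yb
      have h2 := HasDerivAt.inner ℝ h1 h1
      have h3 : (fun r => ⟪y r - yb, y r - yb⟫ : ℝ → ℝ) = ψ := by
        funext r
        rw [real_inner_self_eq_norm_sq]
      have h4 : ⟪y s - yb, v s⟫ + ⟪v s, y s - yb⟫ = w s := by
        have hc := real_inner_comm (v s) (y s - yb)
        simp only [hwdef]
        linarith [hc]
      rw [h3, h4] at h2
      exact h2
    have hb := hsg xb
    have e1 : ⟪(ContinuousLinearMap.adjoint A) (y s), xb - x s⟫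
        = ⟪y s, A xb⟫ - ⟪y s, A (x s)⟫ := by
      rw [ContinuousLinearMap.adjoint_inner_left, map_sub, inner_sub_right]
    rw [inner_neg_left, e1] at hb
    have e2 : ⟪u, x s - xb⟫ = -(⟪yb, A (x s)⟫ - ⟪yb, A xb⟫) := by
      rw [hu, inner_neg_left, ContinuousLinearMap.adjoint_inner_left, map_sub, inner_sub_right]
    have e3 : Q s = (⟪yb, A (x s)⟫ - ⟪yb, A xb⟫) - (⟪y s, A (x s)⟫ - ⟪y s, A xb⟫) := by
      simp only [hQdef]
      rw [← hfeas, inner_sub_left, inner_sub_right, inner_sub_right]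
    have hDQ : D s ≤ Q s := by
      simp only [hDdef, Breg]
      rw [e2, e3]
      linarith [hb]
    have e4 : Q s = ⟪yb - y s, v s⟫ + ⟪yb - y s, fδ - f⟫ := by
      simp only [hQdef, hv]
      rw [← inner_add_right]
      congr 1
      abel
    have e5 : ⟪yb - y s, v s⟫ = -(w s)/2 := by
      rw [show yb - y s = -(y s - yb) by abel, inner_neg_left]
      simp only [hwdef]; ring
    have e6 : ⟪yb - y s, fδ - f⟫ ≤ δ * φ s := by
      have hnn : ‖yb - y s‖ = φ s := by rw [norm_sub_rev]
      calc ⟪yb - y s, fδ - f⟫ ≤ ‖yb - y s‖ * ‖fδ - f‖ := real_inner_le_norm _ _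
        _ ≤ φ s * δ := by
            rw [hnn]
            exact mul_le_mul_of_nonneg_left hnoise (hφ0 s)
        _ = δ * φ s := by ring
    have hQb : Q s ≤ -(w s)/2 + δ * φ s := by
      rw [e4, e5]; linarith [e6]
    refine ⟨hderiv, hDQ, hQb, ?_⟩
    have hws : w s = 2 * ⟪y s - yb, v s⟫ := rfl
    linarith [hD0 s, hDQ, hQb]
  -- Lipschitz facts
  have hLnn : (0:ℝ) ≤ (L:ℝ) := L.coe_nonneg
  have hφlip : ∀ a b : ℝ, |φ a - φ b| ≤ (L:ℝ) * |a - b| := by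
    intro a b
    calc |φ a - φ b| ≤ ‖(y a - yb) - (y b - yb)‖ := abs_norm_sub_norm_le _ _
      _ = ‖y a - y b‖ := by rw [sub_sub_sub_cancel_right]
      _ = dist (y a) (y b) := (dist_eq_norm _ _).symm
      _ ≤ (L:ℝ) * dist a b := hL.dist_le_mul a b
      _ = (L:ℝ) * |a - b| := by rw [Real.dist_eq]
  have hφboundT : ∀ s ∈ Icc (0:ℝ) (t+1), φ s ≤ φ 0 + (L:ℝ)*(t+1) := by
    intro s hs
    have h1 := hφlip s 0
    have h2 : |s - 0| ≤ t + 1 := by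
      rw [sub_zero, abs_of_nonneg hs.1]; exact hs.2
    have h3 : |φ s - φ 0| ≤ (L:ℝ) * (t+1) :=
      le_trans h1 (mul_le_mul_of_nonneg_left h2 hLnn)
    have := abs_le.mp h3
    linarith [this.2]
  set M := φ 0 + (L:ℝ)*(t+1) with hMdef
  have hM0 : 0 ≤ M := by
    have := hφ0 0
    have h1 : 0 ≤ (L:ℝ)*(t+1) := by positivity
    simp only [hMdef]; linarith
  set K := 2 * M * (L:ℝ) with hKdef
  have hK0 : 0 ≤ K := by positivity
  have hψlip : ∀ a ∈ Icc (0:ℝ) (t+1), ∀ b ∈ Icc (0:ℝ) (t+1), |ψ a - ψ b| ≤ K * |a - b| := by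
    intro a ha b hb
    have h1 : ψ a - ψ b = (φ a - φ b) * (φ a + φ b) := by
      simp only [hψdef]; ring
    rw [h1, abs_mul]
    have h2 : |φ a + φ b| ≤ 2*M := by
      rw [abs_of_nonneg (by linarith [hφ0 a, hφ0 b])]
      linarith [hφboundT a ha, hφboundT b hb]
    calc |φ a - φ b| * |φ a + φ b| ≤ ((L:ℝ)*|a - b|) * (2*M) :=
          mul_le_mul (hφlip a b) h2 (abs_nonneg _) (by positivity)
      _ = K * |a - b| := by simp only [hKdef]; ring
  -- integrability of w on intervals
  have hvint : ∀ c d : ℝ, IntegrableOn v (Ioc c d) MeasureTheory.volume := by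
    intro c d
    have hxint : IntegrableOn x (Ioc c d) MeasureTheory.volume :=
      (hx.integrableOn_isCompact (isCompact_Icc (a := c) (b := d))).mono_set Ioc_subset_Icc_self
    exact (A.integrable_comp hxint).sub (integrableOn_const measure_Ioc_lt_top.ne)
  have hwint : ∀ c d : ℝ, c ≤ d → IntervalIntegrable w MeasureTheory.volume c d := by
    intro c d hcd
    rw [intervalIntegrable_iff_integrableOn_Ioc_of_le hcd]
    obtain ⟨B, hB⟩ := (isCompact_Icc (a := c) (b := d)).exists_bound_of_continuousOn
      ((hyc.sub continuous_const).continuousOn)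
    apply Integrable.mono' (((hvint c d).norm.const_mul (2*B)))
    · exact (((hyc.sub continuous_const).aestronglyMeasurable.inner
        (hvint c d).aestronglyMeasurable).const_mul 2)
    · filter_upwards [ae_restrict_mem measurableSet_Ioc] with s hs
      have hBs : ‖y s - yb‖ ≤ B := hB s (Ioc_subset_Icc_self hs)
      have hB0 : 0 ≤ B := le_trans (norm_nonneg _) hBs
      calc ‖w s‖ = 2 * |⟪y s - yb, v s⟫| := by
            simp only [hwdef, Real.norm_eq_abs, abs_mul]
            norm_num
        _ ≤ 2 * (‖y s - yb‖ * ‖v s‖) := by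
            have := abs_real_inner_le_norm (y s - yb) (v s)
            linarith
        _ ≤ 2 * (B * ‖v s‖) := by
            have := mul_le_mul_of_nonneg_right hBs (norm_nonneg (v s))
            linarith
        _ = 2 * B * ‖v s‖ := by ring
  -- FTC
  have hftc : ∀ c d' : ℝ, 0 ≤ c → c ≤ d' → d' ≤ t → ψ d' - ψ c = ∫ s in c..d', w s := by
    intro c d' hc hcd hdt
    apply ftc_ae hcd hK0 hψc
    · intro a ha b hb
      exact hψlip a ⟨le_trans hc ha.1, by linarith [ha.2]⟩ b ⟨le_trans hc hb.1, by linarith [hb.2]⟩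
    · filter_upwards [key] with s hk hmem
      exact (hk (le_of_lt (lt_of_le_of_lt hc hmem.1))).1
  -- Gronwall
  set G : ℝ → ℝ := fun r => ψ 0 + ∫ z in (0:ℝ)..r, (2*δ) * φ z with hGdef
  have hcont2 : Continuous (fun z => (2*δ) * φ z) := continuous_const.mul hφc
  have hGd : ∀ r, HasDerivAt G ((2*δ) * φ r) r := by
    intro r
    exact ((hcont2.integral_hasStrictDerivAt 0 r).hasDerivAt).const_add (ψ 0)
  have hψG : ∀ r ∈ Icc (0:ℝ) t, ψ r ≤ G r := by
    intro r hr
    have hftc0 := hftc 0 r le_rfl hr.1 hr.2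
    have hmono : ∫ z in (0:ℝ)..r, w z ≤ ∫ z in (0:ℝ)..r, (2*δ) * φ z := by
      apply integral_mono_ae_restrict hr.1 (hwint 0 r hr.1) (hcont2.intervalIntegrable 0 r)
      have hle : ∀ᵐ z ∂(MeasureTheory.volume.restrict (Icc (0:ℝ) r)), w z ≤ (2*δ) * φ z := by
        rw [ae_restrict_iff' measurableSet_Icc]
        filter_upwards [key] with z hz hmem
        have h4 := (hz hmem.1).2.2.2
        have hws : w z = 2 * ⟪y z - yb, v z⟫ := rfl
        linarith
      exact hle
    simp only [hGdef]
    linarith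
  have hgron : ∀ s ∈ Icc (0:ℝ) t, φ s ≤ φ 0 + δ * s := by
    intro s hs
    apply le_of_forall_pos_le_add
    intro ε' hε'
    have hden : (0:ℝ) < 1 + s := by linarith [hs.1]
    set ε := ε' / (1 + s) with hεdef
    have hεpos : 0 < ε := div_pos hε' hden
    have hcomp : ∀ ⦃r⦄, r ∈ Icc (0:ℝ) t → G r ≤ (φ 0 + ε + (δ+ε)*r)^2 := by
      refine image_le_of_deriv_right_lt_deriv_boundary (f := G) (a := 0) (b := t)
        (f' := fun r => (2*δ) * φ r) (B := fun r => (φ 0 + ε + (δ+ε)*r)^2)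
        (B' := fun r => 2*(δ+ε)*(φ 0 + ε + (δ+ε)*r))
        (fun r _ => (hGd r).continuousAt.continuousWithinAt)
        (fun r _ => (hGd r).hasDerivWithinAt) ?_ ?_ ?_
      · have hG0 : G 0 = ψ 0 := by
          simp only [hGdef, intervalIntegral.integral_same, add_zero]
        show G 0 ≤ (φ 0 + ε + (δ+ε)*0)^2
        rw [hG0]
        have hψ00 : ψ 0 = φ 0 ^ 2 := rfl
        nlinarith [hφ0 0, hεpos, hψ00]
      · intro r
        have h1 : HasDerivAt (fun r : ℝ => φ 0 + ε + (δ+ε)*r) (δ+ε) r := by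
          simpa using ((hasDerivAt_id r).const_mul (δ+ε)).const_add (φ 0 + ε)
        have h2 := h1.fun_pow 2
        refine h2.congr_deriv ?_
        ring
      · intro r hr hGB
        have hr0 : 0 ≤ r := hr.1
        have hbase : 0 < φ 0 + ε + (δ+ε)*r := by
          have h5 : 0 ≤ (δ+ε)*r := mul_nonneg (by linarith) hr0
          linarith [hφ0 0, hεpos]
        have hGB' : G r = (φ 0 + ε + (δ+ε)*r)^2 := hGB
        have h2 : ψ r ≤ (φ 0 + ε + (δ+ε)*r)^2 := by
          rw [← hGB']
          exact hψG r ⟨hr.1, hr.2.le⟩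
        have hψr : ψ r = φ r ^ 2 := rfl
        have hφr : φ r ≤ φ 0 + ε + (δ+ε)*r := by nlinarith [hφ0 r]
        have hpos : 0 < 2*ε*(φ 0 + ε + (δ+ε)*r) := by positivity
        show (2*δ) * φ r < 2*(δ+ε)*(φ 0 + ε + (δ+ε)*r)
        nlinarith [mul_le_mul_of_nonneg_left hφr (by linarith : (0:ℝ) ≤ 2*δ)]
    have h1 := hcomp hs
    have h2 : ψ s ≤ (φ 0 + ε + (δ+ε)*s)^2 := le_trans (hψG s hs) h1
    have hbase : 0 < φ 0 + ε + (δ+ε)*s := by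
      have h5 : 0 ≤ (δ+ε)*s := mul_nonneg (by linarith) hs.1
      linarith [hφ0 0, hεpos]
    have hψs : ψ s = φ s ^ 2 := rfl
    have h3 : φ s ≤ φ 0 + ε + (δ+ε)*s := by nlinarith [hφ0 s]
    have h4 : ε * (1 + s) = ε' := by
      rw [hεdef]; field_simp
    calc φ s ≤ φ 0 + ε + (δ+ε)*s := h3
      _ = φ 0 + δ*s + ε*(1+s) := by ring
      _ = φ 0 + δ*s + ε' := by rw [h4]
  -- main estimate
  set μt := MeasureTheory.volume.restrict (Ioc (t/2) t) with hμtdef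
  haveI hfin : IsFiniteMeasure μt := ⟨by
    rw [hμtdef, Measure.restrict_apply_univ]; exact measure_Ioc_lt_top⟩
  have hμt_ne : μt ≠ 0 := by
    rw [← Measure.measure_univ_ne_zero, hμtdef, Measure.restrict_apply_univ, Real.volume_Ioc]
    simp only [Ne, ENNReal.ofReal_eq_zero, not_le]
    linarith
  haveI : NeZero μt := ⟨hμt_ne⟩
  have hμt_univ : (μt Set.univ).toReal = t/2 := by
    rw [hμtdef, Measure.restrict_apply_univ, Real.volume_Ioc,
      ENNReal.toReal_ofReal (by linarith)]
    ring
  have hconst : ∀ c : ℝ, ∫ _, c ∂μt = (t/2) * c := by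
    intro c
    rw [MeasureTheory.integral_const, measureReal_def, hμt_univ, smul_eq_mul]
  have hxint : Integrable x μt :=
    (hx.integrableOn_isCompact (isCompact_Icc (a := t/2) (b := t))).mono_set Ioc_subset_Icc_self
  -- integrability of Q
  obtain ⟨B, hB⟩ := (isCompact_Icc (a := t/2) (b := t)).exists_bound_of_continuousOn
    ((continuous_const.sub hyc).continuousOn)
  have hzint : Integrable (fun s => A (x s) - f) μt :=
    (A.integrable_comp hxint).sub (integrable_const _)
  have hQmeas : AEStronglyMeasurable Q μt :=
    (continuous_const.sub hyc).aestronglyMeasurable.inner hzint.aestronglyMeasurable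
  have hQint : Integrable Q μt := by
    apply (hzint.norm.const_mul B).mono' hQmeas
    filter_upwards [ae_restrict_mem measurableSet_Ioc] with s hs
    have hBs : ‖yb - y s‖ ≤ B := hB s (Ioc_subset_Icc_self hs)
    calc ‖Q s‖ = |⟪yb - y s, A (x s) - f⟫| := rfl
      _ ≤ ‖yb - y s‖ * ‖A (x s) - f‖ := abs_real_inner_le_norm _ _
      _ ≤ B * ‖A (x s) - f‖ := mul_le_mul_of_nonneg_right hBs (norm_nonneg _)
  -- integrability of D and J ∘ x
  have hxmeas : AEStronglyMeasurable x μt := hxint.aestronglyMeasurable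
  have hDmeas : AEStronglyMeasurable D μt := by
    simp only [hDdef, Breg]
    exact ((hJc.comp_aestronglyMeasurable hxmeas).sub aestronglyMeasurable_const).sub
      (aestronglyMeasurable_const.inner (hxmeas.sub aestronglyMeasurable_const))
  have hkeyr : ∀ᵐ s ∂μt, s ∈ Ici (0:ℝ) →
      (HasDerivAt ψ (w s) s ∧ D s ≤ Q s ∧ Q s ≤ -(w s)/2 + δ * φ s ∧
        ⟪y s - yb, v s⟫ ≤ δ * φ s) := ae_restrict_of_ae key
  have hmem0 : ∀ᵐ s ∂μt, s ∈ Ioc (t/2) t := by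
    rw [hμtdef]; exact ae_restrict_mem measurableSet_Ioc
  have hDint : Integrable D μt := by
    apply hQint.mono' hDmeas
    filter_upwards [hkeyr, hmem0] with s hk hs
    have hs0 : s ∈ Ici (0:ℝ) := le_of_lt (lt_of_le_of_lt (by linarith) hs.1)
    rw [Real.norm_eq_abs, abs_of_nonneg (hD0 s)]
    exact (hk hs0).2.1
  have hin_int : Integrable (fun s => ⟪u, x s⟫) μt := by
    have h1 := ContinuousLinearMap.integrable_comp (innerSL ℝ u) hxint
    simpa using h1
  have hJxint : Integrable (fun s => J (x s)) μt := by
    have heq : (fun s => J (x s)) = fun s => D s + (J xb + (⟪u, x s⟫ - ⟪u, xb⟫)) := by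
      funext s
      simp only [hDdef, Breg, inner_sub_right]
      ring
    rw [heq]
    exact hDint.add ((integrable_const _).add (hin_int.sub (integrable_const _)))
  -- Jensen
  have havg2 : ∀ F : ℝ → ℝ, ⨍ s, F s ∂μt = (2/t) * ∫ s, F s ∂μt := by
    intro F
    rw [average_eq, measureReal_def, hμt_univ, smul_eq_mul, inv_div]
  have hintert : ∫ s in (t/2)..t, x s = ∫ s, x s ∂μt := by
    rw [intervalIntegral.integral_of_le (by linarith), hμtdef]
  have havg : (2/t) • (∫ s in (t/2)..t, x s) = ⨍ s, x s ∂μt := by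
    rw [average_eq, measureReal_def, hμt_univ, hintert, inv_div]
  have hJensen : J ((2/t) • ∫ s in (t/2)..t, x s) ≤ (2/t) * ∫ s, J (x s) ∂μt := by
    rw [← havg2, havg]
    exact hJ.map_average_le hJc.continuousOn isClosed_univ
      (Filter.Eventually.of_forall fun _ => mem_univ _) hxint hJxint
  have hinner_avg : ⟪u, (2/t) • ∫ s in (t/2)..t, x s⟫ = (2/t) * ∫ s, ⟪u, x s⟫ ∂μt := by
    rw [real_inner_smul_right, hintert]
    congr 1
    exact (integral_inner hxint u).symm
  have hDexp : ∫ s, D s ∂μt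
      = (∫ s, J (x s) ∂μt) - (t/2)*(J xb) - ((∫ s, ⟪u, x s⟫ ∂μt) - (t/2)*⟪u, xb⟫) := by
    have heq : ∀ s, D s = (J (x s) - J xb) - (⟪u, x s⟫ - ⟪u, xb⟫) := by
      intro s
      simp only [hDdef, Breg, inner_sub_right]
    rw [MeasureTheory.integral_congr_ae (Filter.Eventually.of_forall heq)]
    have hsub1 : ∫ s, ((J (x s) - J xb) - (⟪u, x s⟫ - ⟪u, xb⟫)) ∂μt
        = (∫ s, (J (x s) - J xb) ∂μt) - ∫ s, (⟪u, x s⟫ - ⟪u, xb⟫) ∂μt :=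
      MeasureTheory.integral_sub (hJxint.sub (integrable_const _))
        (hin_int.sub (integrable_const _))
    have hsub2 : ∫ s, (J (x s) - J xb) ∂μt = (∫ s, J (x s) ∂μt) - ∫ _, J xb ∂μt :=
      MeasureTheory.integral_sub hJxint (integrable_const _)
    have hsub3 : ∫ s, (⟪u, x s⟫ - ⟪u, xb⟫) ∂μt = (∫ s, ⟪u, x s⟫ ∂μt) - ∫ _, ⟪u, xb⟫ ∂μt :=
      MeasureTheory.integral_sub hin_int (integrable_const _)
    rw [hsub1, hsub2, hsub3, hconst, hconst]
  have hstep1 : Breg J u ((2/t) • ∫ s in (t/2)..t, x s) xb ≤ (2/t) * ∫ s, D s ∂μt := by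
    simp only [Breg, inner_sub_right]
    rw [hDexp, hinner_avg]
    have hexp : (2/t) * ((∫ s, J (x s) ∂μt) - (t/2)*(J xb)
        - ((∫ s, ⟪u, x s⟫ ∂μt) - (t/2)*⟪u, xb⟫))
        = (2/t)*(∫ s, J (x s) ∂μt) - J xb - ((2/t)*(∫ s, ⟪u, x s⟫ ∂μt) - ⟪u, xb⟫) := by
      field_simp
    rw [hexp]
    linarith [hJensen]
  have hstep2 : ∫ s, D s ∂μt ≤ ∫ s, Q s ∂μt := by
    apply MeasureTheory.integral_mono_ae hDint hQint
    filter_upwards [hkeyr, hmem0] with s hk hs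
    exact (hk (le_of_lt (lt_of_le_of_lt (by linarith) hs.1))).2.1
  -- integral of w over [t/2, t] and of the comparison function
  have hwμt : Integrable w μt := by
    have := hwint (t/2) t (by linarith)
    rw [intervalIntegrable_iff_integrableOn_Ioc_of_le (by linarith)] at this
    rwa [hμtdef]
  have hid : Integrable (fun s : ℝ => s) μt := by
    have := (intervalIntegrable_id (μ := MeasureTheory.volume) (a := t/2) (b := t))
    rw [intervalIntegrable_iff_integrableOn_Ioc_of_le (by linarith)] at this
    rwa [hμtdef]
  have hr1 : Integrable (fun s => -(w s/2)) μt := (hwμt.div_const 2).neg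
  have hr2 : Integrable (fun s => δ*φ 0 + δ*δ*s) μt :=
    (integrable_const _).add (hid.const_mul (δ*δ))
  have hstep3 : ∫ s, Q s ∂μt ≤ ∫ s, (-(w s/2) + (δ*φ 0 + δ*δ*s)) ∂μt := by
    apply MeasureTheory.integral_mono_ae hQint (hr1.add hr2)
    filter_upwards [hkeyr, hmem0] with s hk hs
    have hs0 : s ∈ Ici (0:ℝ) := le_of_lt (lt_of_le_of_lt (by linarith) hs.1)
    obtain ⟨_, _, hQle, _⟩ := hk hs0
    have hφs : φ s ≤ φ 0 + δ*s := hgron s ⟨hs0, hs.2⟩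
    have hmul : δ * φ s ≤ δ * (φ 0 + δ*s) := mul_le_mul_of_nonneg_left hφs hδ
    have hring : δ*(φ 0 + δ*s) = δ*φ 0 + δ*δ*s := by ring
    show Q s ≤ -(w s/2) + (δ*φ 0 + δ*δ*s)
    linarith
  have hIw : ∫ s, w s ∂μt = ψ t - ψ (t/2) := by
    rw [hμtdef, ← intervalIntegral.integral_of_le (by linarith : t/2 ≤ t)]
    exact (hftc (t/2) t (by linarith) (by linarith) le_rfl).symm
  have hI_id : ∫ s, s ∂μt = (t^2 - (t/2)^2)/2 := by
    rw [hμtdef, ← intervalIntegral.integral_of_le (by linarith : t/2 ≤ t)]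
    exact integral_id
  have hsum : ∫ s, (-(w s/2) + (δ*φ 0 + δ*δ*s)) ∂μt
      = -((ψ t - ψ (t/2))/2) + (δ*φ 0*(t/2) + δ*δ*((t^2 - (t/2)^2)/2)) := by
    have hadd1 : ∫ s, (-(w s/2) + (δ*φ 0 + δ*δ*s)) ∂μt
        = (∫ s, -(w s/2) ∂μt) + ∫ s, (δ*φ 0 + δ*δ*s) ∂μt :=
      MeasureTheory.integral_add hr1 hr2
    have hadd2 : ∫ s, (δ*φ 0 + δ*δ*s) ∂μt
        = (∫ _, δ*φ 0 ∂μt) + ∫ s, δ*δ*s ∂μt :=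
      MeasureTheory.integral_add (integrable_const _) (hid.const_mul (δ*δ))
    have hneg : ∫ s, -(w s/2) ∂μt = -∫ s, w s/2 ∂μt := MeasureTheory.integral_neg _
    have hdiv : ∫ s, w s/2 ∂μt = (∫ s, w s ∂μt)/2 := MeasureTheory.integral_div 2 _
    have hcm : ∫ s, δ*δ*s ∂μt = δ*δ * ∫ s, s ∂μt := MeasureTheory.integral_const_mul (δ*δ) _
    rw [hadd1, hadd2, hneg, hdiv, hcm, hconst, hIw, hI_id]
    ring
  have hc20 : (0:ℝ) ≤ 2/t := le_of_lt (div_pos (by norm_num) ht)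
  have hψhalf : ψ (t/2) ≤ (φ 0 + δ*(t/2))^2 := by
    have h1 := hgron (t/2) ⟨by linarith, by linarith⟩
    have h2 := hφ0 (t/2)
    have h3 : ψ (t/2) = φ (t/2)^2 := rfl
    nlinarith
  have hψt : 0 ≤ ψ t := by
    have h3 : ψ t = φ t^2 := rfl
    rw [h3]
    positivity
  have hC : φ 0 = ‖y 0 - yb‖ := rfl
  calc Breg J u ((2/t) • ∫ s in (t/2)..t, x s) xb
      ≤ (2/t) * ∫ s, D s ∂μt := hstep1
    _ ≤ (2/t) * ∫ s, Q s ∂μt := mul_le_mul_of_nonneg_left hstep2 hc20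
    _ ≤ (2/t) * ∫ s, (-(w s/2) + (δ*φ 0 + δ*δ*s)) ∂μt :=
        mul_le_mul_of_nonneg_left hstep3 hc20
    _ = (2/t) * (-((ψ t - ψ (t/2))/2) + (δ*φ 0*(t/2) + δ*δ*((t^2 - (t/2)^2)/2))) := by
        rw [hsum]
    _ ≤ ‖y 0 - yb‖^2/t + 2*‖y 0 - yb‖*δ + δ^2*t := by
        rw [← hC]
        have key2 : 2 * (-((ψ t - ψ (t/2))/2) + (δ*φ 0*(t/2) + δ*δ*((t^2 - (t/2)^2)/2)))
            ≤ φ 0^2 + 2*φ 0*δ*t + δ^2*t^2 := by nlinarith [hψhalf, hψt]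
        calc (2/t) * (-((ψ t - ψ (t/2))/2) + (δ*φ 0*(t/2) + δ*δ*((t^2 - (t/2)^2)/2)))
            = (2 * (-((ψ t - ψ (t/2))/2) + (δ*φ 0*(t/2) + δ*δ*((t^2 - (t/2)^2)/2))))/t := by
              ring
          _ ≤ (φ 0^2 + 2*φ 0*δ*t + δ^2*t^2)/t := by gcongr
          _ = φ 0^2/t + 2*φ 0*δ + δ^2*t := by
              field_simp
end
end
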